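/- arXiv:2304.03032 — 2 statements merged into one kernel-verified Lean document; each statement's English description precedes it below -/
import Mathlib

section
/- Fix a nonzero real a and a positive real z. Then the limit as w → z (w > 0) of [ (z·e^{a} − w·e^{a}) · (z·e^{−a} − w·e^{−a}) · ((log z − log w)² − 4a²) ] / [ (z·e^{−a} − w·e^{a}) · (z·e^{a} − w·e^{−a}) · (log z − log w)² ] equals 4a²/(e^{a} − e^{−a})². In particular, with a = ħu/2 this limit equals S(ħu)^{−2} where S(v) = (e^{v/2} − e^{−v/2})/v. -/
/-!
Since `e^{a} e^{-a} = 1`, the first two factors of the numerator multiply to `(z - w)²`, so the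
quotient is `((z - w) / (log z - log w))² · g w` with `g` continuous at `z`. The first factor tends
to `z²` because `log' z = 1 / z`, and `g z = 4a² / (z² (e^{a} - e^{-a})²)`; the factor `z²` cancels.
-/

open Filter Topology Real

theorem HasDerivAt.tendsto_sub_div_sub {𝕜 : Type*} [NontriviallyNormedField 𝕜] {f : 𝕜 → 𝕜}
    {f' x : 𝕜} (hf : HasDerivAt f f' x) (hf' : f' ≠ 0) :
    Tendsto (fun w => (x - w) / (f x - f w)) (𝓝[≠] x) (𝓝 f'⁻¹) := by
  refine ((hasDerivAt_iff_tendsto_slope.mp hf).inv₀ hf').congr fun w => ?_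
  rw [slope_def_field, inv_div, ← neg_div_neg_eq, neg_sub, neg_sub]

theorem Real.tendsto_sub_div_log_sub_log {z : ℝ} (hz : 0 < z) :
    Tendsto (fun w => (z - w) / (log z - log w)) (𝓝[≠] z) (𝓝 z) := by
  simpa using (hasDerivAt_log hz.ne').tendsto_sub_div_sub (inv_ne_zero hz.ne')

theorem Real.exp_sub_exp_neg_ne_zero {a : ℝ} (ha : a ≠ 0) : exp a - exp (-a) ≠ 0 :=
  sub_ne_zero.mpr fun h => ha (by linarith [exp_injective h])

theorem Real.mul_exp_sub_mul_exp_mul_mul_exp_neg_sub_mul_exp_neg (a z w : ℝ) :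
    (z * exp a - w * exp a) * (z * exp (-a) - w * exp (-a)) = (z - w) ^ 2 := by
  rw [exp_neg]
  field_simp

theorem lambert_phi2_hat_diagonal (a : ℝ) (ha : a ≠ 0) (z : ℝ) (hz : 0 < z) :
    Filter.Tendsto
      (fun w : ℝ =>
        ((z * Real.exp a - w * Real.exp a) * (z * Real.exp (-a) - w * Real.exp (-a)) *
            ((Real.log z - Real.log w) ^ 2 - 4 * a ^ 2)) /
          ((z * Real.exp (-a) - w * Real.exp a) * (z * Real.exp a - w * Real.exp (-a)) *
            (Real.log z - Real.log w) ^ 2))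
      (nhdsWithin z {w | 0 < w ∧ w ≠ z})
      (nhds (4 * a ^ 2 / (Real.exp a - Real.exp (-a)) ^ 2)) := by
  have hE := exp_sub_exp_neg_ne_zero ha
  have hDz : (z * exp (-a) - z * exp a) * (z * exp a - z * exp (-a)) =
      -(z * (exp a - exp (-a))) ^ 2 := by ring
  have hD : (z * exp (-a) - z * exp a) * (z * exp a - z * exp (-a)) ≠ 0 := by
    rw [hDz, neg_ne_zero]
    exact pow_ne_zero 2 (mul_ne_zero hz.ne' hE)
  have hg : Tendsto (fun w => ((log z - log w) ^ 2 - 4 * a ^ 2) /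
        ((z * exp (-a) - w * exp a) * (z * exp a - w * exp (-a)))) (𝓝 z)
      (𝓝 (((log z - log z) ^ 2 - 4 * a ^ 2) /
        ((z * exp (-a) - z * exp a) * (z * exp a - z * exp (-a))))) :=
    have : ContinuousAt log z := continuousAt_log hz.ne'
    ContinuousAt.div (by fun_prop) (by fun_prop) hD
  have hlim := (((tendsto_sub_div_log_sub_log hz).pow 2).mono_left
    (nhdsWithin_mono z (s := {w | 0 < w ∧ w ≠ z}) fun _ => And.right)).mul
    (hg.mono_left nhdsWithin_le_nhds)
  convert hlim using 2 with w
  -- an identity for every `w`: `div_mul_div_comm` holds even where `log w = log z`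
  · rw [mul_exp_sub_mul_exp_mul_mul_exp_neg_sub_mul_exp_neg, div_pow, div_mul_div_comm,
      mul_comm ((log z - log w) ^ 2)]
  · rw [hDz, sub_self]
    field_simp
    ring
end

section
/- For all positive reals μ₁, μ₂ > 0 and 0 < ε₁ < ε₂, one has (1/(2π)) · ∫∫ e^{−μ₁ z₁²/2 − μ₂ z₂²/2}/(z₁ − z₂)² dz₁ dz₂ = −√(μ₁ μ₂)/(μ₁ + μ₂), where zⱼ ranges over the line iεⱼ + ℝ. -/
open MeasureTheory Set Filter Topology Complex

lemma aux_tendsto_mul_exp {a : ℝ} (ha : 0 < a) :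
    Tendsto (fun y : ℝ => y * Real.exp (-a * y)) atTop (𝓝 0) := by
  have h := (Real.tendsto_pow_mul_exp_neg_atTop_nhds_zero 1).comp
    (Filter.tendsto_id.const_mul_atTop ha)
  have h2 := h.const_mul (1 / a)
  rw [mul_zero] at h2
  refine h2.congr fun y => ?_
  simp only [Function.comp_apply, pow_one, id_eq]
  field_simp

lemma aux_integrableOn_mul_exp {a : ℝ} (ha : 0 < a) :
    IntegrableOn (fun x : ℝ => x * Real.exp (-a * x)) (Ioi 0) := by
  have hI : IntegrableOn (fun x : ℝ => (2 / a) * Real.exp (-(a / 2) * x)) (Ioi 0) :=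
    (exp_neg_integrableOn_Ioi 0 (by linarith)).const_mul _
  refine hI.mono' ?_ ?_
  · exact (continuous_id.mul (Real.continuous_exp.comp (continuous_const.mul continuous_id))).aestronglyMeasurable
  · rw [ae_restrict_iff' measurableSet_Ioi]
    refine ae_of_all _ fun x hx => ?_
    have hx0 : (0:ℝ) < x := hx
    rw [Real.norm_eq_abs, abs_mul, abs_of_pos hx0, abs_of_pos (Real.exp_pos _)]
    have h1 : (a / 2) * x ≤ Real.exp ((a / 2) * x) := by
      have := Real.add_one_le_exp ((a / 2) * x); linarith
    have h2 : x ≤ (2 / a) * Real.exp ((a / 2) * x) := by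
      have hpos := Real.exp_pos ((a / 2) * x)
      rw [div_mul_eq_mul_div, le_div_iff₀ ha]
      nlinarith
    calc x * Real.exp (-a * x) ≤ ((2 / a) * Real.exp ((a / 2) * x)) * Real.exp (-a * x) := by
          apply mul_le_mul_of_nonneg_right h2 (Real.exp_pos _).le
      _ = (2 / a) * Real.exp (-(a / 2) * x) := by
          rw [mul_assoc, ← Real.exp_add]; ring_nf

lemma aux_integrableOn_mul_cexp {s : ℂ} (hs : 0 < s.re) :
    IntegrableOn (fun x : ℝ => (x : ℂ) * Complex.exp (-s * x)) (Ioi 0) := by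
  refine (aux_integrableOn_mul_exp hs).mono' ?_ ?_
  · apply Continuous.aestronglyMeasurable
    exact Complex.continuous_ofReal.mul (Complex.continuous_exp.comp
      (continuous_const.mul Complex.continuous_ofReal))
  · rw [ae_restrict_iff' measurableSet_Ioi]
    refine ae_of_all _ fun x hx => ?_
    have hx0 : (0:ℝ) < x := hx
    rw [norm_mul, Complex.norm_real, Real.norm_eq_abs,
      Complex.norm_exp, abs_of_pos hx0]
    have : (-s * (x:ℂ)).re = -s.re * x := by simp [Complex.mul_re]
    rw [this]

lemma aux_integral_mul_cexp {s : ℂ} (hs : 0 < s.re) :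
    ∫ x in Ioi (0:ℝ), (x : ℂ) * Complex.exp (-s * x) = 1 / s ^ 2 := by
  have hs0 : s ≠ 0 := fun h => by simp [h] at hs
  have A : ∀ z : ℂ, HasDerivAt (fun z : ℂ => -Complex.exp (-s * z) * (z / s + 1 / s ^ 2))
      (z * Complex.exp (-s * z)) z := by
    intro z
    have h1 : HasDerivAt (fun z : ℂ => Complex.exp (-s * z)) (-s * Complex.exp (-s * z)) z := by
      have := ((hasDerivAt_id z).const_mul (-s)).cexp
      simpa [mul_comm] using this
    have h2 : HasDerivAt (fun z : ℂ => z / s + 1 / s ^ 2) (1 / s) z := by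
      have := ((hasDerivAt_id z).div_const s).add_const (1 / s ^ 2)
      simpa [one_div] using this
    have := (h1.neg.mul h2)
    refine this.congr_deriv ?_
    simp only [Pi.neg_apply]
    field_simp
    ring
  have B : Tendsto (fun y : ℝ => -Complex.exp (-s * y) * ((y : ℂ) / s + 1 / s ^ 2)) atTop
      (𝓝 0) := by
    apply squeeze_zero_norm' (a := fun y : ℝ =>
      Real.exp (-s.re * y) * (y * (1 / ‖s‖) + 1 / ‖s‖ ^ 2))
    · filter_upwards [eventually_ge_atTop (0:ℝ)] with y hy
      rw [neg_mul, norm_neg, norm_mul]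
      have h1 : ‖Complex.exp (-s * (y:ℂ))‖ = Real.exp (-s.re * y) := by
        rw [Complex.norm_exp]
        congr 1; simp [Complex.mul_re]
      rw [h1]
      apply mul_le_mul_of_nonneg_left _ (Real.exp_pos _).le
      refine (norm_add_le _ _).trans ?_
      gcongr
      · rw [norm_div, Complex.norm_real, Real.norm_eq_abs,
          _root_.abs_of_nonneg hy, div_eq_mul_one_div]
      · rw [norm_div, norm_one, norm_pow]
    · have habs : 0 < ‖s‖ := norm_pos_iff.mpr hs0
      have h1 : Tendsto (fun y : ℝ => Real.exp (-s.re * y) * (y * (1 / ‖s‖)))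
          atTop (𝓝 0) := by
        have := (aux_tendsto_mul_exp hs).mul_const (1 / ‖s‖)
        rw [zero_mul] at this
        refine this.congr fun y => by ring
      have h2 : Tendsto (fun y : ℝ => Real.exp (-s.re * y) * (1 / ‖s‖ ^ 2))
          atTop (𝓝 0) := by
        have he : Tendsto (fun y : ℝ => Real.exp (-s.re * y)) atTop (𝓝 0) := by
          have := Real.tendsto_exp_neg_atTop_nhds_zero.comp
            (Filter.tendsto_id.const_mul_atTop hs)
          refine this.congr fun y => ?_
          simp only [Function.comp_apply, id_eq]
          ring_nf
        have := he.mul_const (1 / ‖s‖ ^ 2)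
        rwa [zero_mul] at this
      have := h1.add h2
      rw [add_zero] at this
      refine this.congr fun y => by ring
  have := integral_Ioi_of_hasDerivAt_of_tendsto' (a := 0)
    (fun x _ => ((A x).comp_ofReal)) (aux_integrableOn_mul_cexp hs) B
  rw [this]
  simp
open MeasureTheory Set Filter Topology Complex

lemma aux_gauss_shift {μ : ℝ} (hμ : 0 < μ) (ε x : ℝ) :
    ∫ t : ℝ, Complex.exp (-(μ : ℂ) * ((t : ℂ) + Complex.I * ε) ^ 2 / 2
        + Complex.I * ((t : ℂ) + Complex.I * ε) * x)
      = (Real.sqrt (2 * Real.pi / μ) : ℂ) * Complex.exp (-(x : ℂ) ^ 2 / (2 * μ)) := by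
  have hμ0 : (μ : ℂ) ≠ 0 := Complex.ofReal_ne_zero.mpr hμ.ne'
  have hb : (((-μ / 2 : ℝ) : ℂ)).re < 0 := by rw [Complex.ofReal_re]; linarith
  have hint : ∀ t : ℝ,
      -(μ : ℂ) * ((t : ℂ) + Complex.I * ε) ^ 2 / 2 + Complex.I * ((t : ℂ) + Complex.I * ε) * x
      = ((-μ / 2 : ℝ) : ℂ) * (t : ℂ) ^ 2 + (Complex.I * ((x : ℂ) - (μ : ℂ) * (ε : ℂ))) * (t : ℂ)
          + ((μ * ε ^ 2 / 2 - ε * x : ℝ) : ℂ) := by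
    intro t
    push_cast
    linear_combination ((ε : ℂ) * (x : ℂ) - (μ : ℂ) * (ε : ℂ) ^ 2 / 2) * Complex.I_sq
  simp_rw [hint]
  rw [integral_cexp_quadratic hb]
  congr 1
  · have h1 : (↑Real.pi / -((-μ / 2 : ℝ) : ℂ)) = ((2 * Real.pi / μ : ℝ) : ℂ) := by
      push_cast
      field_simp
    rw [h1]
    have h2 : ((2 * Real.pi / μ : ℝ) : ℂ) ^ (1 / 2 : ℂ)
        = (((2 * Real.pi / μ) ^ (1 / 2 : ℝ) : ℝ) : ℂ) := by
      rw [Complex.ofReal_cpow (by positivity : (0:ℝ) ≤ 2 * Real.pi / μ)]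
      norm_num
    rw [h2, ← Real.sqrt_eq_rpow]
  · congr 1
    rw [mul_pow, Complex.I_sq, neg_one_mul]
    push_cast
    field_simp
    ring
open Complex

lemma aux_re1 (μ₁ μ₂ ε₁ ε₂ t₁ t₂ x : ℝ) :
    (-(μ₁ : ℂ) * ((t₁ : ℂ) + Complex.I * ε₁) ^ 2 / 2 - (μ₂ : ℂ) * ((t₂ : ℂ) + Complex.I * ε₂) ^ 2 / 2
      - Complex.I * (((t₁ : ℂ) + Complex.I * ε₁) - ((t₂ : ℂ) + Complex.I * ε₂)) * x).re
    = (-(μ₁ / 2) * (t₁ ^ 2 - ε₁ ^ 2) + -(μ₂ / 2) * (t₂ ^ 2 - ε₂ ^ 2)) + (ε₁ - ε₂) * x := by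
  simp [Complex.div_re, Complex.mul_re, Complex.mul_im, Complex.add_re, Complex.add_im,
    Complex.sub_re, Complex.sub_im, Complex.normSq_apply, pow_two]
  ring

lemma aux_re2 (μ₁ ε₁ t₁ x : ℝ) :
    (-(μ₁ : ℂ) * ((t₁ : ℂ) + Complex.I * ε₁) ^ 2 / 2
      - Complex.I * ((t₁ : ℂ) + Complex.I * ε₁) * x).re
    = -(μ₁ / 2) * (t₁ ^ 2 - ε₁ ^ 2) + ε₁ * x := by
  simp [Complex.div_re, Complex.mul_re, Complex.mul_im, Complex.add_re, Complex.add_im,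
    Complex.sub_re, Complex.sub_im, Complex.normSq_apply, pow_two]
  ring

lemma aux_re3 {μ : ℝ} (hμ : μ ≠ 0) (x : ℝ) : (-(x : ℂ) ^ 2 / (2 * μ)).re = -(x ^ 2) / (2 * μ) := by
  simp [Complex.div_re, Complex.mul_re, Complex.normSq_apply, pow_two]
  field_simp

section Main

variable (μ₁ μ₂ ε₁ ε₂ : ℝ)

lemma aux_inv_sq_rep {w : ℂ} (hw : 0 < (Complex.I * w).re) (E : ℂ) :
    Complex.exp E / w ^ 2
      = ∫ x in Ioi (0 : ℝ), -((x : ℂ) * Complex.exp (E - Complex.I * w * x)) := by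
  have hint := aux_integral_mul_cexp hw
  calc Complex.exp E / w ^ 2
      = -(Complex.exp E * (1 / (Complex.I * w) ^ 2)) := by
        rw [mul_pow, Complex.I_sq]; ring
    _ = -(Complex.exp E * ∫ x in Ioi (0:ℝ), (x : ℂ) * Complex.exp (-(Complex.I * w) * x)) := by
        rw [hint]
    _ = ∫ x in Ioi (0:ℝ), -((x : ℂ) * Complex.exp (E - Complex.I * w * x)) := by
        rw [← integral_const_mul, ← integral_neg]
        refine integral_congr_ae (Filter.Eventually.of_forall fun x => ?_)
        dsimp only
        rw [show E - Complex.I * w * (x:ℂ) = E + -(Complex.I * w) * (x:ℂ) from by ring,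
          Complex.exp_add]
        ring

lemma step_inner (hε : ε₁ < ε₂) (t₁ t₂ : ℝ) :
    Complex.exp (-(μ₁ : ℂ) * ((t₁ : ℂ) + Complex.I * ε₁) ^ 2 / 2
        - (μ₂ : ℂ) * ((t₂ : ℂ) + Complex.I * ε₂) ^ 2 / 2) /
      (((t₁ : ℂ) + Complex.I * ε₁) - ((t₂ : ℂ) + Complex.I * ε₂)) ^ 2
    = ∫ x in Ioi (0 : ℝ), -((x : ℂ) * Complex.exp
        (-(μ₁ : ℂ) * ((t₁ : ℂ) + Complex.I * ε₁) ^ 2 / 2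
          - (μ₂ : ℂ) * ((t₂ : ℂ) + Complex.I * ε₂) ^ 2 / 2
          - Complex.I * (((t₁ : ℂ) + Complex.I * ε₁) - ((t₂ : ℂ) + Complex.I * ε₂)) * x)) := by
  have hs : 0 < (Complex.I * (((t₁ : ℂ) + Complex.I * ε₁) - ((t₂ : ℂ) + Complex.I * ε₂))).re := by
    have : (Complex.I * (((t₁ : ℂ) + Complex.I * ε₁) - ((t₂ : ℂ) + Complex.I * ε₂))).re
        = ε₂ - ε₁ := by
      simp [Complex.mul_re, Complex.mul_im, Complex.sub_im, Complex.add_im,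
        Complex.sub_re, Complex.add_re]
    rw [this]; linarith
  exact aux_inv_sq_rep hs _

lemma fubini1_integrable (hμ₂ : 0 < μ₂) (hε : ε₁ < ε₂) (t₁ : ℝ) :
    Integrable (Function.uncurry fun (t₂ x : ℝ) =>
      -((x : ℂ) * Complex.exp
        (-(μ₁ : ℂ) * ((t₁ : ℂ) + Complex.I * ε₁) ^ 2 / 2
          - (μ₂ : ℂ) * ((t₂ : ℂ) + Complex.I * ε₂) ^ 2 / 2
          - Complex.I * (((t₁ : ℂ) + Complex.I * ε₁) - ((t₂ : ℂ) + Complex.I * ε₂)) * x)))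
      ((volume : Measure ℝ).prod (volume.restrict (Ioi 0))) := by
  have hδ : 0 < ε₂ - ε₁ := by linarith
  have hh : Integrable (fun t₂ : ℝ =>
      Real.exp (-(μ₁ / 2) * (t₁ ^ 2 - ε₁ ^ 2)) * Real.exp (-(μ₂ / 2) * (t₂ ^ 2 - ε₂ ^ 2)))
      (volume : Measure ℝ) := by
    have base := (integrable_exp_neg_mul_sq (show (0:ℝ) < μ₂ / 2 by linarith)).const_mul
      (Real.exp (-(μ₁ / 2) * (t₁ ^ 2 - ε₁ ^ 2)) * Real.exp (μ₂ / 2 * ε₂ ^ 2))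
    refine base.congr (Filter.Eventually.of_forall fun t => ?_)
    dsimp only
    rw [mul_assoc, ← Real.exp_add]
    congr 1
    exact congrArg Real.exp (by ring)
  have hg : Integrable (fun x : ℝ => |x| * Real.exp ((ε₁ - ε₂) * x))
      (volume.restrict (Ioi 0)) := by
    refine (aux_integrableOn_mul_exp hδ).congr_fun (fun x hx => ?_) measurableSet_Ioi
    dsimp only
    rw [abs_of_pos hx]
    congr 1
    exact congrArg Real.exp (by ring)
  refine (hh.mul_prod hg).mono' ?_ (Filter.Eventually.of_forall fun p => ?_)
  · apply Continuous.aestronglyMeasurable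
    fun_prop
  · rcases p with ⟨t₂, x⟩
    simp only [Function.uncurry]
    rw [norm_neg, norm_mul, Complex.norm_real, Real.norm_eq_abs,
      Complex.norm_exp, aux_re1, Real.exp_add, Real.exp_add]
    apply le_of_eq
    ring

lemma step_gauss_inner (hμ₂ : 0 < μ₂) (t₁ x : ℝ) :
    ∫ t₂ : ℝ, -((x : ℂ) * Complex.exp
        (-(μ₁ : ℂ) * ((t₁ : ℂ) + Complex.I * ε₁) ^ 2 / 2
          - (μ₂ : ℂ) * ((t₂ : ℂ) + Complex.I * ε₂) ^ 2 / 2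
          - Complex.I * (((t₁ : ℂ) + Complex.I * ε₁) - ((t₂ : ℂ) + Complex.I * ε₂)) * x))
    = -((x : ℂ) * Complex.exp (-(μ₁ : ℂ) * ((t₁ : ℂ) + Complex.I * ε₁) ^ 2 / 2
          - Complex.I * ((t₁ : ℂ) + Complex.I * ε₁) * x))
        * ((Real.sqrt (2 * Real.pi / μ₂) : ℂ) * Complex.exp (-(x : ℂ) ^ 2 / (2 * μ₂))) := by
  have hsplit : ∀ t₂ : ℝ,
      -((x : ℂ) * Complex.exp
        (-(μ₁ : ℂ) * ((t₁ : ℂ) + Complex.I * ε₁) ^ 2 / 2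
          - (μ₂ : ℂ) * ((t₂ : ℂ) + Complex.I * ε₂) ^ 2 / 2
          - Complex.I * (((t₁ : ℂ) + Complex.I * ε₁) - ((t₂ : ℂ) + Complex.I * ε₂)) * x))
      = (-((x : ℂ) * Complex.exp (-(μ₁ : ℂ) * ((t₁ : ℂ) + Complex.I * ε₁) ^ 2 / 2
          - Complex.I * ((t₁ : ℂ) + Complex.I * ε₁) * x)))
        * Complex.exp (-(μ₂ : ℂ) * ((t₂ : ℂ) + Complex.I * ε₂) ^ 2 / 2
          + Complex.I * ((t₂ : ℂ) + Complex.I * ε₂) * x) := by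
    intro t₂
    rw [show -(μ₁ : ℂ) * ((t₁ : ℂ) + Complex.I * ε₁) ^ 2 / 2
          - (μ₂ : ℂ) * ((t₂ : ℂ) + Complex.I * ε₂) ^ 2 / 2
          - Complex.I * (((t₁ : ℂ) + Complex.I * ε₁) - ((t₂ : ℂ) + Complex.I * ε₂)) * x
        = (-(μ₁ : ℂ) * ((t₁ : ℂ) + Complex.I * ε₁) ^ 2 / 2
            - Complex.I * ((t₁ : ℂ) + Complex.I * ε₁) * x)
          + (-(μ₂ : ℂ) * ((t₂ : ℂ) + Complex.I * ε₂) ^ 2 / 2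
            + Complex.I * ((t₂ : ℂ) + Complex.I * ε₂) * x) from by ring,
      Complex.exp_add]
    ring
  simp_rw [hsplit]
  rw [integral_const_mul, aux_gauss_shift hμ₂ ε₂ x]

lemma fubini2_integrable (hμ₁ : 0 < μ₁) (hμ₂ : 0 < μ₂) :
    Integrable (Function.uncurry fun (t₁ x : ℝ) =>
      -((x : ℂ) * Complex.exp (-(μ₁ : ℂ) * ((t₁ : ℂ) + Complex.I * ε₁) ^ 2 / 2
          - Complex.I * ((t₁ : ℂ) + Complex.I * ε₁) * x))
        * ((Real.sqrt (2 * Real.pi / μ₂) : ℂ) * Complex.exp (-(x : ℂ) ^ 2 / (2 * μ₂))))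
      ((volume : Measure ℝ).prod (volume.restrict (Ioi 0))) := by
  have hh : Integrable (fun t₁ : ℝ => Real.exp (-(μ₁ / 2) * (t₁ ^ 2 - ε₁ ^ 2)))
      (volume : Measure ℝ) := by
    have base := (integrable_exp_neg_mul_sq (show (0:ℝ) < μ₁ / 2 by linarith)).const_mul
      (Real.exp (μ₁ / 2 * ε₁ ^ 2))
    refine base.congr (Filter.Eventually.of_forall fun t => ?_)
    dsimp only
    rw [← Real.exp_add]
    exact congrArg Real.exp (by ring)
  have hg : Integrable (fun x : ℝ => (Real.sqrt (2 * Real.pi / μ₂) * Real.exp (μ₂ * ε₁ ^ 2))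
      * (|x| * Real.exp (-(1 / (4 * μ₂)) * x ^ 2))) (volume.restrict (Ioi 0)) := by
    have h4 : (0:ℝ) < 1 / (4 * μ₂) := by positivity
    have gint : Integrable (fun x : ℝ => |x| * Real.exp (-(1 / (4 * μ₂)) * x ^ 2))
        (volume : Measure ℝ) := by
      have := (integrable_mul_exp_neg_mul_sq h4).abs
      refine this.congr (Filter.Eventually.of_forall fun x => ?_)
      dsimp only
      rw [abs_mul, abs_of_pos (Real.exp_pos _)]
    exact ((gint.const_mul _).restrict)
  refine (hh.mul_prod hg).mono' ?_ (Filter.Eventually.of_forall fun p => ?_)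
  · apply Continuous.aestronglyMeasurable
    fun_prop
  · rcases p with ⟨t₁, x⟩
    simp only [Function.uncurry]
    have key : Real.exp (ε₁ * x) * Real.exp (-(x ^ 2) / (2 * μ₂))
        ≤ Real.exp (μ₂ * ε₁ ^ 2) * Real.exp (-(1 / (4 * μ₂)) * x ^ 2) := by
      rw [← Real.exp_add, ← Real.exp_add]
      apply Real.exp_le_exp.mpr
      have hid : x ^ 2 / (2 * μ₂) = x ^ 2 / (4 * μ₂) + x ^ 2 / (4 * μ₂) := by
        field_simp; ring
      have key2 : ε₁ * x ≤ μ₂ * ε₁ ^ 2 + x ^ 2 / (4 * μ₂) := by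
        rw [← sub_le_iff_le_add', le_div_iff₀ (by linarith : (0:ℝ) < 4 * μ₂)]
        nlinarith [sq_nonneg (x - 2 * μ₂ * ε₁)]
      have hid2 : -(1 / (4 * μ₂)) * x ^ 2 = -(x ^ 2 / (4 * μ₂)) := by ring
      rw [hid2]
      have : -(x ^ 2) / (2 * μ₂) = -(x ^ 2 / (4 * μ₂)) - x ^ 2 / (4 * μ₂) := by
        rw [neg_div, hid]; ring
      rw [this]
      linarith
    rw [norm_mul, norm_neg, norm_mul, norm_mul, Complex.norm_real, Complex.norm_real,
      Real.norm_eq_abs, Real.norm_eq_abs,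
      Complex.norm_exp, Complex.norm_exp, aux_re2,
      aux_re3 hμ₂.ne', Real.exp_add,
      _root_.abs_of_nonneg (Real.sqrt_nonneg _)]
    calc |x| * (Real.exp (-(μ₁ / 2) * (t₁ ^ 2 - ε₁ ^ 2)) * Real.exp (ε₁ * x))
          * (Real.sqrt (2 * Real.pi / μ₂) * Real.exp (-(x ^ 2) / (2 * μ₂)))
        = (Real.exp (-(μ₁ / 2) * (t₁ ^ 2 - ε₁ ^ 2)) * Real.sqrt (2 * Real.pi / μ₂) * |x|)
          * (Real.exp (ε₁ * x) * Real.exp (-(x ^ 2) / (2 * μ₂))) := by ring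
      _ ≤ (Real.exp (-(μ₁ / 2) * (t₁ ^ 2 - ε₁ ^ 2)) * Real.sqrt (2 * Real.pi / μ₂) * |x|)
          * (Real.exp (μ₂ * ε₁ ^ 2) * Real.exp (-(1 / (4 * μ₂)) * x ^ 2)) := by
          apply mul_le_mul_of_nonneg_left key (by positivity)
      _ = Real.exp (-(μ₁ / 2) * (t₁ ^ 2 - ε₁ ^ 2))
          * ((Real.sqrt (2 * Real.pi / μ₂) * Real.exp (μ₂ * ε₁ ^ 2))
            * (|x| * Real.exp (-(1 / (4 * μ₂)) * x ^ 2))) := by ring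

lemma step_gauss_outer (hμ₁ : 0 < μ₁) (x : ℝ) :
    ∫ t₁ : ℝ, -((x : ℂ) * Complex.exp (-(μ₁ : ℂ) * ((t₁ : ℂ) + Complex.I * ε₁) ^ 2 / 2
          - Complex.I * ((t₁ : ℂ) + Complex.I * ε₁) * x))
        * ((Real.sqrt (2 * Real.pi / μ₂) : ℂ) * Complex.exp (-(x : ℂ) ^ 2 / (2 * μ₂)))
    = -((x : ℂ) * ((Real.sqrt (2 * Real.pi / μ₁) : ℂ) * Complex.exp (-(x : ℂ) ^ 2 / (2 * μ₁)))
        * ((Real.sqrt (2 * Real.pi / μ₂) : ℂ) * Complex.exp (-(x : ℂ) ^ 2 / (2 * μ₂)))) := by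
  have hsplit : ∀ t₁ : ℝ,
      -((x : ℂ) * Complex.exp (-(μ₁ : ℂ) * ((t₁ : ℂ) + Complex.I * ε₁) ^ 2 / 2
          - Complex.I * ((t₁ : ℂ) + Complex.I * ε₁) * x))
        * ((Real.sqrt (2 * Real.pi / μ₂) : ℂ) * Complex.exp (-(x : ℂ) ^ 2 / (2 * μ₂)))
      = (-((x : ℂ) * ((Real.sqrt (2 * Real.pi / μ₂) : ℂ)
            * Complex.exp (-(x : ℂ) ^ 2 / (2 * μ₂)))))
          * Complex.exp (-(μ₁ : ℂ) * ((t₁ : ℂ) + Complex.I * ε₁) ^ 2 / 2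
            + Complex.I * ((t₁ : ℂ) + Complex.I * ε₁) * ((-x : ℝ) : ℂ)) := by
    intro t₁
    rw [show -(μ₁ : ℂ) * ((t₁ : ℂ) + Complex.I * ε₁) ^ 2 / 2
          - Complex.I * ((t₁ : ℂ) + Complex.I * ε₁) * x
        = -(μ₁ : ℂ) * ((t₁ : ℂ) + Complex.I * ε₁) ^ 2 / 2
          + Complex.I * ((t₁ : ℂ) + Complex.I * ε₁) * ((-x : ℝ) : ℂ) from by push_cast; ring]
    ring
  simp_rw [hsplit]
  rw [integral_const_mul, aux_gauss_shift hμ₁ ε₁ (-x)]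
  rw [show (((-x : ℝ) : ℂ)) ^ 2 = (x : ℂ) ^ 2 from by push_cast; ring]
  ring

lemma step_final (hμ₁ : 0 < μ₁) (hμ₂ : 0 < μ₂) :
    ∫ x in Ioi (0:ℝ),
      -((x : ℂ) * ((Real.sqrt (2 * Real.pi / μ₁) : ℂ) * Complex.exp (-(x : ℂ) ^ 2 / (2 * μ₁)))
        * ((Real.sqrt (2 * Real.pi / μ₂) : ℂ) * Complex.exp (-(x : ℂ) ^ 2 / (2 * μ₂))))
    = -((Real.sqrt (2 * Real.pi / μ₁) : ℂ) * (Real.sqrt (2 * Real.pi / μ₂) : ℂ)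
        * ((μ₁ * μ₂ / (μ₁ + μ₂) : ℝ) : ℂ)) := by
  have hμ₁0 : (μ₁ : ℂ) ≠ 0 := Complex.ofReal_ne_zero.mpr hμ₁.ne'
  have hμ₂0 : (μ₂ : ℂ) ≠ 0 := Complex.ofReal_ne_zero.mpr hμ₂.ne'
  have hb : (0:ℝ) < ((((μ₁ + μ₂) / (2 * μ₁ * μ₂) : ℝ) : ℂ)).re := by
    rw [Complex.ofReal_re]; positivity
  have hsplit : ∀ x : ℝ,
      -((x : ℂ) * ((Real.sqrt (2 * Real.pi / μ₁) : ℂ) * Complex.exp (-(x : ℂ) ^ 2 / (2 * μ₁)))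
        * ((Real.sqrt (2 * Real.pi / μ₂) : ℂ) * Complex.exp (-(x : ℂ) ^ 2 / (2 * μ₂))))
      = (-((Real.sqrt (2 * Real.pi / μ₁) : ℂ) * (Real.sqrt (2 * Real.pi / μ₂) : ℂ)))
        * ((x : ℂ) * Complex.exp (-(((μ₁ + μ₂) / (2 * μ₁ * μ₂) : ℝ) : ℂ) * (x : ℂ) ^ 2)) := by
    intro x
    rw [show -(((μ₁ + μ₂) / (2 * μ₁ * μ₂) : ℝ) : ℂ) * (x : ℂ) ^ 2
        = -(x : ℂ) ^ 2 / (2 * μ₁) + -(x : ℂ) ^ 2 / (2 * μ₂) from by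
      push_cast; field_simp; ring]
    rw [Complex.exp_add]
    ring
  simp_rw [hsplit]
  rw [integral_const_mul, integral_mul_cexp_neg_mul_sq hb]
  have hsum : ((μ₁:ℂ) + μ₂) ≠ 0 := by
    rw [show ((μ₁:ℂ) + μ₂) = ((μ₁ + μ₂ : ℝ) : ℂ) from by push_cast; ring]
    exact Complex.ofReal_ne_zero.mpr (by positivity)
  rw [show (2 * (((μ₁ + μ₂) / (2 * μ₁ * μ₂) : ℝ) : ℂ))⁻¹ = ((μ₁ * μ₂ / (μ₁ + μ₂) : ℝ) : ℂ) from by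
    push_cast
    rw [inv_eq_one_div]
    field_simp]
  ring

lemma final_algebra (hμ₁ : 0 < μ₁) (hμ₂ : 0 < μ₂) :
    1 / (2 * Real.pi) * (Real.sqrt (2 * Real.pi / μ₁) * Real.sqrt (2 * Real.pi / μ₂)
      * (μ₁ * μ₂ / (μ₁ + μ₂)))
    = Real.sqrt (μ₁ * μ₂) / (μ₁ + μ₂) := by
  have h0 : (0:ℝ) < μ₁ * μ₂ := mul_pos hμ₁ hμ₂
  have hs : (0:ℝ) < Real.sqrt (μ₁ * μ₂) := Real.sqrt_pos.mpr h0
  have hπ : (0:ℝ) < Real.pi := Real.pi_pos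
  have h12 : Real.sqrt (2 * Real.pi / μ₁) * Real.sqrt (2 * Real.pi / μ₂)
      = 2 * Real.pi / Real.sqrt (μ₁ * μ₂) := by
    rw [← Real.sqrt_mul (by positivity)]
    rw [show (2 * Real.pi / μ₁) * (2 * Real.pi / μ₂) = (2 * Real.pi) ^ 2 / (μ₁ * μ₂) from by
      field_simp]
    rw [Real.sqrt_div (by positivity : (0:ℝ) ≤ (2 * Real.pi) ^ 2),
      Real.sqrt_sq (by positivity : (0:ℝ) ≤ 2 * Real.pi)]
  rw [h12]
  have hmm : Real.sqrt (μ₁ * μ₂) * Real.sqrt (μ₁ * μ₂) = μ₁ * μ₂ := Real.mul_self_sqrt h0.le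
  have hsum : (0:ℝ) < μ₁ + μ₂ := by linarith
  field_simp
  linear_combination -1 * hmm

end Main

open scoped Real in
theorem airy_bergman_laplace (μ₁ μ₂ : ℝ) (hμ₁ : 0 < μ₁) (hμ₂ : 0 < μ₂)
    (ε₁ ε₂ : ℝ) (hε₁ : 0 < ε₁) (hε : ε₁ < ε₂) :
    (1 / (2 * π) : ℂ) *
        ∫ t₁ : ℝ, ∫ t₂ : ℝ,
          Complex.exp (-(μ₁ : ℂ) * (t₁ + Complex.I * ε₁) ^ 2 / 2
              - (μ₂ : ℂ) * (t₂ + Complex.I * ε₂) ^ 2 / 2) /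
            ((t₁ + Complex.I * ε₁) - (t₂ + Complex.I * ε₂)) ^ 2
      = -(Real.sqrt (μ₁ * μ₂) / (μ₁ + μ₂) : ℝ) := by
  have E1 : (∫ t₁ : ℝ, ∫ t₂ : ℝ,
          Complex.exp (-(μ₁ : ℂ) * (t₁ + Complex.I * ε₁) ^ 2 / 2
              - (μ₂ : ℂ) * (t₂ + Complex.I * ε₂) ^ 2 / 2) /
            ((t₁ + Complex.I * ε₁) - (t₂ + Complex.I * ε₂)) ^ 2)
      = ∫ t₁ : ℝ, ∫ x in Ioi (0:ℝ),
          -((x : ℂ) * Complex.exp (-(μ₁ : ℂ) * ((t₁ : ℂ) + Complex.I * ε₁) ^ 2 / 2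
              - Complex.I * ((t₁ : ℂ) + Complex.I * ε₁) * x))
            * ((Real.sqrt (2 * Real.pi / μ₂) : ℂ)
              * Complex.exp (-(x : ℂ) ^ 2 / (2 * μ₂))) := by
    refine integral_congr_ae (Filter.Eventually.of_forall fun t₁ => ?_)
    dsimp only
    calc (∫ t₂ : ℝ,
            Complex.exp (-(μ₁ : ℂ) * (t₁ + Complex.I * ε₁) ^ 2 / 2
                - (μ₂ : ℂ) * (t₂ + Complex.I * ε₂) ^ 2 / 2) /
              ((t₁ + Complex.I * ε₁) - (t₂ + Complex.I * ε₂)) ^ 2)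
        = ∫ t₂ : ℝ, ∫ x in Ioi (0:ℝ), -((x : ℂ) * Complex.exp
            (-(μ₁ : ℂ) * ((t₁ : ℂ) + Complex.I * ε₁) ^ 2 / 2
              - (μ₂ : ℂ) * ((t₂ : ℂ) + Complex.I * ε₂) ^ 2 / 2
              - Complex.I * (((t₁ : ℂ) + Complex.I * ε₁) - ((t₂ : ℂ) + Complex.I * ε₂)) * x)) := by
          exact integral_congr_ae (Filter.Eventually.of_forall fun t₂ =>
            step_inner μ₁ μ₂ ε₁ ε₂ hε t₁ t₂)
      _ = ∫ x in Ioi (0:ℝ), ∫ t₂ : ℝ, -((x : ℂ) * Complex.exp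
            (-(μ₁ : ℂ) * ((t₁ : ℂ) + Complex.I * ε₁) ^ 2 / 2
              - (μ₂ : ℂ) * ((t₂ : ℂ) + Complex.I * ε₂) ^ 2 / 2
              - Complex.I * (((t₁ : ℂ) + Complex.I * ε₁) - ((t₂ : ℂ) + Complex.I * ε₂)) * x)) :=
          integral_integral_swap (fubini1_integrable μ₁ μ₂ ε₁ ε₂ hμ₂ hε t₁)
      _ = _ := integral_congr_ae (Filter.Eventually.of_forall fun x =>
            step_gauss_inner μ₁ μ₂ ε₁ ε₂ hμ₂ t₁ x)
  rw [E1, integral_integral_swap (fubini2_integrable μ₁ μ₂ ε₁ hμ₁ hμ₂)]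
  rw [show (∫ x in Ioi (0:ℝ), ∫ t₁ : ℝ,
        -((x : ℂ) * Complex.exp (-(μ₁ : ℂ) * ((t₁ : ℂ) + Complex.I * ε₁) ^ 2 / 2
            - Complex.I * ((t₁ : ℂ) + Complex.I * ε₁) * x))
          * ((Real.sqrt (2 * Real.pi / μ₂) : ℂ) * Complex.exp (-(x : ℂ) ^ 2 / (2 * μ₂))))
      = ∫ x in Ioi (0:ℝ),
        -((x : ℂ) * ((Real.sqrt (2 * Real.pi / μ₁) : ℂ) * Complex.exp (-(x : ℂ) ^ 2 / (2 * μ₁)))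
          * ((Real.sqrt (2 * Real.pi / μ₂) : ℂ) * Complex.exp (-(x : ℂ) ^ 2 / (2 * μ₂)))) from
    integral_congr_ae (Filter.Eventually.of_forall fun x =>
      step_gauss_outer μ₁ μ₂ ε₁ hμ₁ x)]
  rw [step_final μ₁ μ₂ hμ₁ hμ₂]
  rw [show ((1 / (2 * (π:ℂ))) : ℂ) * -((Real.sqrt (2 * Real.pi / μ₁) : ℂ)
        * (Real.sqrt (2 * Real.pi / μ₂) : ℂ) * ((μ₁ * μ₂ / (μ₁ + μ₂) : ℝ) : ℂ))
      = -(((1 / (2 * Real.pi) * (Real.sqrt (2 * Real.pi / μ₁) * Real.sqrt (2 * Real.pi / μ₂)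
          * (μ₁ * μ₂ / (μ₁ + μ₂))) : ℝ) : ℂ)) from by push_cast; ring]
  rw [final_algebra μ₁ μ₂ hμ₁ hμ₂]
end
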